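/- arXiv:1507.02180 — 8 statements merged into one kernel-verified Lean document; each statement's English description precedes it below -/
import Mathlib

section
/- Let G be a monoid, A and B countable alphabets, and Λ ⊆ A^G a shift space. A map Φ : Λ → B^G is a generalized sliding block code if, and only if, Φ is continuous and commutes with all translations (i.e., Φ(σ^g x) = σ^g(Φ(x)) for all x ∈ Λ and g ∈ G). -/
/-- **Curtis–Hedlund–Lyndon theorem for generalized sliding block codes.**
Let `G` be a monoid, `A` and `B` countable discrete alphabets, and `Λ ⊆ A^G`
a shift space (closed and invariant under all translations `σ^g x = (x (g*i))_i`).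
A map `Φ : Λ → B^G` is a generalized sliding block code (i.e. there is a family
`{C_b}_{b ∈ B}` of pairwise disjoint sets with union `Λ`, each open in `Λ`, such
that `(Φ x)_g = b ↔ σ^g x ∈ C_b`) if and only if `Φ` is continuous and commutes
with all translations. -/
theorem generalized_sliding_block_code_iff_continuous_and_commutes
    {G A B : Type*} [Monoid G] [Countable A] [Countable B]
    [TopologicalSpace A] [DiscreteTopology A]
    [TopologicalSpace B] [DiscreteTopology B]
    (Λ : Set (G → A)) (hΛclosed : IsClosed Λ)
    (hΛinv : ∀ g : G, ∀ x ∈ Λ, (fun i => x (g * i)) ∈ Λ)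
    (Φ : Λ → (G → B)) :
    (∃ C : B → Set (G → A),
        Pairwise (fun b b' => Disjoint (C b) (C b')) ∧
        (⋃ b, C b) = Λ ∧
        (∀ b, (C b).Nonempty → IsOpen ((Subtype.val : Λ → (G → A)) ⁻¹' C b)) ∧
        (∀ (x : Λ) (g : G) (b : B), Φ x g = b ↔ (fun i => x.1 (g * i)) ∈ C b))
    ↔ (Continuous Φ ∧
        ∀ (x : Λ) (g : G),
          Φ ⟨fun i => x.1 (g * i), hΛinv g x.1 x.2⟩ = fun i => Φ x (g * i)) := by
  constructor
  · rintro ⟨C, hdisj, hunion, hopen, hC⟩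
    have hτ : ∀ g : G, Continuous (fun x : Λ => (⟨fun i => x.1 (g*i), hΛinv g x.1 x.2⟩ : Λ)) := by
      intro g
      have hc : Continuous (fun x : Λ => (fun i => x.1 (g*i) : G → A)) :=
        continuous_pi fun i => (continuous_apply (g*i)).comp continuous_subtype_val
      exact hc.subtype_mk _
    constructor
    · apply continuous_pi
      intro g
      refine continuous_discrete_rng.mpr fun b => ?_
      have key : (fun x : Λ => Φ x g) ⁻¹' {b} =
          (fun x : Λ => (⟨fun i => x.1 (g*i), hΛinv g x.1 x.2⟩ : Λ)) ⁻¹'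
            (Subtype.val ⁻¹' C b) := by
        ext x
        simp [hC x g b]
      rw [key]
      apply (hτ g).isOpen_preimage
      rcases (C b).eq_empty_or_nonempty with h | h
      · simp [h]
      · exact hopen b h
    · intro x g
      funext h
      set y : Λ := ⟨fun i => x.1 (g*i), hΛinv g x.1 x.2⟩ with hy
      have h1 := (hC y h (Φ y h)).mp rfl
      have h2 := hC x (g*h) (Φ y h)
      simp only [mul_assoc] at h2
      exact (h2.mpr h1).symm
  · rintro ⟨hcont, hcomm⟩
    refine ⟨fun b => Subtype.val '' {x : Λ | Φ x 1 = b}, ?_, ?_, ?_, ?_⟩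
    · intro b b' hbb'
      rw [Set.disjoint_left]
      rintro y ⟨x, hx, rfl⟩ ⟨x', hx', hxx'⟩
      exact hbb' (hx ▸ (congrArg (fun z => Φ z 1) (Subtype.ext hxx'.symm) ▸ hx' : Φ x 1 = b'))
    · ext y
      simp only [Set.mem_iUnion, Set.mem_image, Set.mem_setOf_eq]
      constructor
      · rintro ⟨b, x, -, rfl⟩; exact x.2
      · intro hy; exact ⟨Φ ⟨y, hy⟩ 1, ⟨y, hy⟩, rfl, rfl⟩
    · intro b _
      rw [Set.preimage_image_eq _ Subtype.val_injective]
      exact (isOpen_discrete {b}).preimage ((continuous_apply 1).comp hcont)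
    · intro x g b
      have hz : Φ ⟨fun i => x.1 (g*i), hΛinv g x.1 x.2⟩ 1 = Φ x g := by
        rw [hcomm x g]; simp
      constructor
      · intro h
        exact ⟨⟨fun i => x.1 (g*i), hΛinv g x.1 x.2⟩, by simp only [Set.mem_setOf_eq, hz, h], rfl⟩
      · rintro ⟨z, hzb, hzeq⟩
        have : z = ⟨fun i => x.1 (g*i), hΛinv g x.1 x.2⟩ := Subtype.ext hzeq
        rw [this, Set.mem_setOf_eq, hz] at hzb
        exact hzb
end

section
/- Let G be a monoid, A and B countable alphabets, and Λ ⊆ A^G a shift space. If Φ : Λ → B^G is continuous and commutes with all translations, then the sets C_b := Φ^{-1}([b]_1) (b ∈ B) are pairwise disjoint open subsets of Λ whose union is Λ, and for all x ∈ Λ and g ∈ G one has (Φ(x))_g = b if and only if σ^g(x) ∈ C_b; in particular Φ is a generalized sliding block code. -/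
/-- If `Φ : Λ → B^G` is continuous and commutes with all translations, then the sets
`C_b := Φ⁻¹([b]_1)` are pairwise disjoint open subsets of `Λ` whose union is `Λ`, and
for all `x ∈ Λ`, `g ∈ G`, `b ∈ B`: `(Φ x)_g = b ↔ σ^g x ∈ C_b`. In particular `Φ` is
a generalized sliding block code. -/
theorem continuous_commuting_is_generalized_sliding_block_code
    {G A B : Type*} [Monoid G] [Countable A] [Countable B]
    [TopologicalSpace A] [DiscreteTopology A]
    [TopologicalSpace B] [DiscreteTopology B]
    (Λ : Set (G → A)) (hΛclosed : IsClosed Λ)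
    (hΛinv : ∀ g : G, ∀ x ∈ Λ, (fun i => x (g * i)) ∈ Λ)
    (Φ : Λ → (G → B))
    (hcont : Continuous Φ)
    (hcomm : ∀ (x : Λ) (g : G),
      Φ ⟨fun i => x.1 (g * i), hΛinv g x.1 x.2⟩ = fun i => Φ x (g * i)) :
    -- the sets C_b := Φ⁻¹([b]_1), viewed as subsets of Λ
    (Pairwise fun b b' : B =>
        Disjoint {x : Λ | Φ x 1 = b} {x : Λ | Φ x 1 = b'}) ∧
    (∀ b : B, IsOpen {x : Λ | Φ x 1 = b}) ∧
    (⋃ b : B, {x : Λ | Φ x 1 = b}) = Set.univ ∧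
    (∀ (x : Λ) (g : G) (b : B),
        Φ x g = b ↔ (⟨fun i => x.1 (g * i), hΛinv g x.1 x.2⟩ : Λ) ∈
          {x : Λ | Φ x 1 = b}) ∧
    -- in particular, Φ is a generalized sliding block code
    (∃ C : B → Set (G → A),
        Pairwise (fun b b' => Disjoint (C b) (C b')) ∧
        (⋃ b, C b) = Λ ∧
        (∀ b, (C b).Nonempty → IsOpen ((Subtype.val : Λ → (G → A)) ⁻¹' C b)) ∧
        (∀ (x : Λ) (g : G) (b : B), Φ x g = b ↔ (fun i => x.1 (g * i)) ∈ C b)) := by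
  have key : ∀ (x : Λ) (g : G) (b : B),
      Φ x g = b ↔ Φ ⟨fun i => x.1 (g * i), hΛinv g x.1 x.2⟩ 1 = b := by
    intro x g b
    rw [hcomm x g]
    simp
  have hopen : ∀ b : B, IsOpen {x : Λ | Φ x 1 = b} := by
    intro b
    have : {x : Λ | Φ x 1 = b} = (fun x => Φ x 1) ⁻¹' {b} := rfl
    rw [this]
    exact ((continuous_apply (1 : G)).comp hcont).isOpen_preimage _ (isOpen_discrete _)
  refine ⟨?_, hopen, ?_, fun x g b => key x g b, ?_⟩
  · intro b b' hbb'
    refine Set.disjoint_left.2 fun x hx hx' => hbb' ?_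
    exact hx.symm.trans hx'
  · ext x; simp
  · refine ⟨fun b => Subtype.val '' {x : Λ | Φ x 1 = b}, ?_, ?_, ?_, ?_⟩
    · intro b b' hbb'
      refine Set.disjoint_left.2 ?_
      rintro y ⟨x, hx, rfl⟩ ⟨x', hx', hxx'⟩
      exact hbb' (hx.symm.trans (by rw [Subtype.val_injective hxx'] at hx'; exact hx'))
    · ext y
      simp only [Set.mem_iUnion, Set.mem_image, Set.mem_setOf_eq]
      constructor
      · rintro ⟨b, x, _, rfl⟩; exact x.2
      · intro hy; exact ⟨Φ ⟨y, hy⟩ 1, ⟨y, hy⟩, rfl, rfl⟩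
    · intro b _
      have : (Subtype.val : Λ → (G → A)) ⁻¹' (Subtype.val '' {x : Λ | Φ x 1 = b})
          = {x : Λ | Φ x 1 = b} := Set.preimage_image_eq _ Subtype.val_injective
      rw [this]; exact hopen b
    · intro x g b
      rw [key x g b]
      constructor
      · intro h; exact ⟨_, h, rfl⟩
      · rintro ⟨x', hx', hxx'⟩
        have : x' = ⟨fun i => x.1 (g * i), hΛinv g x.1 x.2⟩ := Subtype.ext hxx'
        rwa [this] at hx'
end

section
/- Let G be a monoid, A and B countable alphabets, and Λ ⊆ A^G a shift space. If Φ : Λ → B^G is a generalized sliding block code, then Φ is continuous (with respect to the subspace topology on Λ and the product topology on B^G). -/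
/-- If `Φ : Λ → B^G` is a generalized sliding block code, then `Φ` is continuous
(subspace topology on `Λ`, product topology on `B^G`). -/
theorem generalized_sliding_block_code_continuous
    {G A B : Type*} [Monoid G] [Countable A] [Countable B]
    [TopologicalSpace A] [DiscreteTopology A]
    [TopologicalSpace B] [DiscreteTopology B]
    (Λ : Set (G → A)) (hΛclosed : IsClosed Λ)
    (hΛinv : ∀ g : G, ∀ x ∈ Λ, (fun i => x (g * i)) ∈ Λ)
    (Φ : Λ → (G → B))
    (C : B → Set (G → A))
    (hdisj : Pairwise (fun b b' => Disjoint (C b) (C b')))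
    (hunion : (⋃ b, C b) = Λ)
    (hopen : ∀ b, (C b).Nonempty → IsOpen ((Subtype.val : Λ → (G → A)) ⁻¹' C b))
    (hloc : ∀ (x : Λ) (g : G) (b : B), Φ x g = b ↔ (fun i => x.1 (g * i)) ∈ C b) :
    Continuous Φ := by
  apply continuous_pi
  intro g
  have hσ : Continuous (fun x : Λ => (⟨fun i => x.1 (g * i), hΛinv g x.1 x.2⟩ : Λ)) := by
    have h1 : Continuous (fun x : Λ => (fun i => x.1 (g * i) : G → A)) := by
      apply continuous_pi
      intro i
      exact (continuous_apply (g * i)).comp continuous_subtype_val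
    exact h1.subtype_mk _
  rw [continuous_discrete_rng]
  intro b
  have hset : (fun x : Λ => Φ x g) ⁻¹' {b} =
      (fun x : Λ => (⟨fun i => x.1 (g * i), hΛinv g x.1 x.2⟩ : Λ)) ⁻¹'
        ((Subtype.val : Λ → (G → A)) ⁻¹' C b) := by
    ext x
    simp [hloc x g b]
  rw [hset]
  rcases (C b).eq_empty_or_nonempty with h | h
  · simp [h]
  · exact (hopen b h).preimage hσ
end

section
/- Let G be a monoid, A a FINITE alphabet, B a countable alphabet, and Λ ⊆ A^G a shift space. If Φ : Λ → B^G is a generalized sliding block code, then Φ is a classical sliding block code: there exist a finite set N ⊆ G and a local rule φ : W_N(Λ) → B such that (Φ(x))_g = φ((σ^g x)|_N) for all x ∈ Λ and g ∈ G. -/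
/-- Over a FINITE alphabet `A`, every generalized sliding block code
`Φ : Λ → B^G` is a classical sliding block code: there exist a finite set
`N ⊆ G` and a local rule `φ : W_N(Λ) → B` with `(Φ x)_g = φ ((σ^g x)|_N)`
for all `x ∈ Λ` and `g ∈ G`. -/
theorem generalized_sliding_block_code_is_classical_of_finite_alphabet
    {G A B : Type*} [Monoid G] [Finite A] [Countable B]
    [TopologicalSpace A] [DiscreteTopology A]
    [TopologicalSpace B] [DiscreteTopology B]
    (Λ : Set (G → A)) (hΛclosed : IsClosed Λ)
    (hΛinv : ∀ g : G, ∀ x ∈ Λ, (fun i => x (g * i)) ∈ Λ)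
    (Φ : Λ → (G → B))
    (C : B → Set (G → A))
    (hdisj : Pairwise (fun b b' => Disjoint (C b) (C b')))
    (hunion : (⋃ b, C b) = Λ)
    (hopen : ∀ b, (C b).Nonempty → IsOpen ((Subtype.val : Λ → (G → A)) ⁻¹' C b))
    (hloc : ∀ (x : Λ) (g : G) (b : B), Φ x g = b ↔ (fun i => x.1 (g * i)) ∈ C b) :
    ∃ (N : Finset G)
      (φ : {w : {i // i ∈ N} → A // ∃ y ∈ Λ, ∀ i : {i // i ∈ N}, y i.1 = w i} → B),
      ∀ (x : Λ) (g : G),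
        Φ x g = φ ⟨fun i => x.1 (g * i.1),
          ⟨fun i => x.1 (g * i), hΛinv g x.1 x.2, fun _ => rfl⟩⟩ := by
  classical
  have hmem : ∀ z ∈ Λ, ∃ b, z ∈ C b := by
    intro z hz
    rw [← hunion] at hz
    exact Set.mem_iUnion.mp hz
  have huniq : ∀ b b' z, z ∈ C b → z ∈ C b' → b = b' := by
    intro b b' z hb hb'
    by_contra h
    exact Set.disjoint_left.mp (hdisj h) hb hb'
  -- for every point of Λ there is a finite window determining its class
  have hwin : ∀ x : Λ, ∃ (N : Finset G) (b : B),
      (∀ i ∈ N, True) ∧ (∀ i ∈ N, x.1 i = x.1 i) ∧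
      (∀ i ∈ N, x.1 i ∈ ({x.1 i} : Set A)) ∧
      (∀ z ∈ Λ, (∀ i ∈ N, z i = x.1 i) → z ∈ C b) := by
    intro x
    obtain ⟨b, hb⟩ := hmem x.1 x.2
    have hne : (C b).Nonempty := ⟨x.1, hb⟩
    have hop := hopen b hne
    rw [isOpen_induced_iff] at hop
    obtain ⟨U, hUopen, hUeq⟩ := hop
    have hxU : x.1 ∈ U := by
      have : x ∈ (Subtype.val : Λ → (G → A)) ⁻¹' C b := hb
      rw [← hUeq] at this
      exact this
    obtain ⟨I, u, hu, hpi⟩ := isOpen_pi_iff.mp hUopen x.1 hxU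
    refine ⟨I, b, fun _ _ => trivial, fun _ _ => rfl, fun i _ => rfl, ?_⟩
    intro z hz hagree
    have hzU : z ∈ U := by
      apply hpi
      intro i hi
      have : z i = x.1 i := hagree i hi
      rw [this]
      exact (hu i hi).2
    have : (⟨z, hz⟩ : Λ) ∈ (Subtype.val : Λ → (G → A)) ⁻¹' U := hzU
    rw [hUeq] at this
    exact this
  choose Nx bx _ _ _ hNx using hwin
  -- compactness
  have hΛc : IsCompact Λ := hΛclosed.isCompact
  set V : Λ → Set (G → A) := fun x => {z | ∀ i ∈ Nx x, z i = x.1 i} with hV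
  have hVopen : ∀ x : Λ, IsOpen (V x) := by
    intro x
    have : V x = (↑(Nx x) : Set G).pi (fun i => {x.1 i}) := by
      ext z
      simp [hV, Set.mem_pi]
    rw [this]
    exact isOpen_set_pi (Nx x).finite_toSet (fun i _ => isOpen_discrete _)
  have hcover : Λ ⊆ ⋃ x : Λ, V x := by
    intro z hz
    exact Set.mem_iUnion.mpr ⟨⟨z, hz⟩, fun i _ => rfl⟩
  obtain ⟨t, ht⟩ := hΛc.elim_finite_subcover V hVopen hcover
  set N : Finset G := t.biUnion Nx with hN
  -- key: membership in C b depends only on coordinates in N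
  have hkey : ∀ y ∈ Λ, ∀ y' ∈ Λ, (∀ i ∈ N, y i = y' i) → ∀ b, y ∈ C b → y' ∈ C b := by
    intro y hy y' hy' hagree b hyb
    obtain ⟨x, hxt, hyx⟩ : ∃ x ∈ t, y ∈ V x := by
      have := ht hy
      simpa using this
    have hsub : ∀ i ∈ Nx x, i ∈ N := fun i hi =>
      Finset.mem_biUnion.mpr ⟨x, hxt, hi⟩
    have hy'x : ∀ i ∈ Nx x, y' i = x.1 i := by
      intro i hi
      rw [← hagree i (hsub i hi)]
      exact hyx i hi
    have hyCb : y ∈ C (bx x) := hNx x y hy hyx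
    have hy'Cb : y' ∈ C (bx x) := hNx x y' hy' hy'x
    have : b = bx x := huniq b (bx x) y hyb hyCb
    rw [this]
    exact hy'Cb
  refine ⟨N, fun w => (hmem w.2.choose w.2.choose_spec.1).choose, ?_⟩
  intro x g
  set w : {w : {i // i ∈ N} → A // ∃ y ∈ Λ, ∀ i : {i // i ∈ N}, y i.1 = w i} :=
    ⟨fun i => x.1 (g * i.1), ⟨fun i => x.1 (g * i), hΛinv g x.1 x.2, fun _ => rfl⟩⟩ with hw
  set y := w.2.choose with hy
  have hyΛ : y ∈ Λ := w.2.choose_spec.1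
  have hyw : ∀ i : {i // i ∈ N}, y i.1 = w.1 i := w.2.choose_spec.2
  set b := (hmem y hyΛ).choose with hb
  have hyCb : y ∈ C b := (hmem y hyΛ).choose_spec
  -- σ^g x agrees with y on N
  have hagree : ∀ i ∈ N, y i = x.1 (g * i) := by
    intro i hi
    exact hyw ⟨i, hi⟩
  have hσΛ : (fun i => x.1 (g * i)) ∈ Λ := hΛinv g x.1 x.2
  have hσCb : (fun i => x.1 (g * i)) ∈ C b := hkey y hyΛ _ hσΛ hagree b hyCb
  have hσCΦ : (fun i => x.1 (g * i)) ∈ C (Φ x g) := (hloc x g (Φ x g)).mp rfl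
  exact huniq (Φ x g) b _ hσCΦ hσCb
end

section
/- Let Φ : ℕ^ℕ → ℕ^ℕ be defined by (Φ(x))_j = x_{j + x_j} for all j ∈ ℕ. Then Φ is a generalized sliding block code on the full shift Λ = ℕ^ℕ: the sets C_b := {x ∈ ℕ^ℕ : x_{x_0} = b} (b ∈ ℕ) are pairwise disjoint open subsets of ℕ^ℕ whose union is ℕ^ℕ (each C_b being a union of cylinders, namely C_0 ⊇ [x_0 = 0] and, for each n ≥ 1 and b ∈ ℕ, C_b ⊇ [x_0 = n, x_n = b]), and for all x ∈ ℕ^ℕ, g ∈ ℕ, b ∈ ℕ: (Φ(x))_g = b if and only if σ^g(x) ∈ C_b. -/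
/-- The map `Φ : ℕ^ℕ → ℕ^ℕ`, `(Φ x)_j = x_{j + x_j}`, is a generalized sliding
block code on the full shift `Λ = ℕ^ℕ`: the sets `C_b := {x | x_{x_0} = b}` are
pairwise disjoint open subsets of `ℕ^ℕ` whose union is `ℕ^ℕ` (each being a union
of cylinders: `C_0 ⊇ [x_0 = 0]` and `C_b ⊇ [x_0 = n, x_n = b]` for `n ≥ 1`), and
`(Φ x)_g = b ↔ σ^g x ∈ C_b` for all `x`, `g`, `b`. -/
theorem example_map_is_generalized_sliding_block_code :
    (Pairwise fun b b' : ℕ =>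
        Disjoint {x : ℕ → ℕ | x (x 0) = b} {x : ℕ → ℕ | x (x 0) = b'}) ∧
    (∀ b : ℕ, IsOpen {x : ℕ → ℕ | x (x 0) = b}) ∧
    (⋃ b : ℕ, {x : ℕ → ℕ | x (x 0) = b}) = Set.univ ∧
    {x : ℕ → ℕ | x 0 = 0} ⊆ {x : ℕ → ℕ | x (x 0) = 0} ∧
    (∀ n : ℕ, 1 ≤ n → ∀ b : ℕ,
        {x : ℕ → ℕ | x 0 = n ∧ x n = b} ⊆ {x : ℕ → ℕ | x (x 0) = b}) ∧
    (∀ (x : ℕ → ℕ) (g b : ℕ),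
        x (g + x g) = b ↔ (fun i => x (g + i)) ∈ {x : ℕ → ℕ | x (x 0) = b}) := by
  refine ⟨?_, ?_, ?_, ?_, ?_, ?_⟩
  · intro b b' hbb'
    rw [Set.disjoint_left]
    intro x hx hx'
    exact hbb' (hx.symm.trans hx')
  · intro b
    have : {x : ℕ → ℕ | x (x 0) = b} = ⋃ n : ℕ, {x : ℕ → ℕ | x 0 = n} ∩ {x : ℕ → ℕ | x n = b} := by
      ext x
      simp only [Set.mem_setOf_eq, Set.mem_iUnion, Set.mem_inter_iff]
      constructor
      · intro h; exact ⟨x 0, rfl, h⟩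
      · rintro ⟨n, hn, hb⟩; rw [hn]; exact hb
    rw [this]
    refine isOpen_iUnion fun n => (IsOpen.inter ?_ ?_)
    · show IsOpen ((fun x : ℕ → ℕ => x 0) ⁻¹' {n})
      exact (isOpen_discrete ({n} : Set ℕ)).preimage (continuous_apply 0)
    · show IsOpen ((fun x : ℕ → ℕ => x n) ⁻¹' {b})
      exact (isOpen_discrete ({b} : Set ℕ)).preimage (continuous_apply n)
  · ext x
    simp only [Set.mem_iUnion, Set.mem_setOf_eq, Set.mem_univ, iff_true]
    exact ⟨x (x 0), rfl⟩
  · intro x hx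
    simp only [Set.mem_setOf_eq] at *
    rw [hx]; exact hx
  · intro n _ b x hx
    simp only [Set.mem_setOf_eq] at *
    rw [hx.1]; exact hx.2
  · intro x g b
    simp only [Set.mem_setOf_eq, Nat.add_zero]
end

section
/- Let Φ : ℕ^ℕ → ℕ^ℕ be defined by (Φ(x))_j = x_{j + x_j} for all j ∈ ℕ. Then Φ is NOT a classical sliding block code: there do not exist a finite set N ⊆ ℕ and a map φ : (N → ℕ) → ℕ such that (Φ(x))_g = φ((σ^g x)|_N) for all x ∈ ℕ^ℕ and all g ∈ ℕ. -/
/-- The map `Φ : ℕ^ℕ → ℕ^ℕ`, `(Φ x)_j = x_{j + x_j}`, is NOT a classical sliding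
block code: there are no finite `N ⊆ ℕ` and local rule `φ : (N → ℕ) → ℕ` with
`(Φ x)_g = φ ((σ^g x)|_N)` for all `x` and `g`. -/
theorem example_map_not_classical_sliding_block_code :
    ¬ ∃ (N : Finset ℕ) (φ : ({i // i ∈ N} → ℕ) → ℕ),
        ∀ (x : ℕ → ℕ) (g : ℕ),
          x (g + x g) = φ (fun i : {i // i ∈ N} => x (g + i.1)) := by
  rintro ⟨N, φ, h⟩
  set m : ℕ := N.sup id + 1 with hm
  have hmN : m ∉ N := by
    intro hmem
    have := Finset.le_sup (f := id) hmem
    simp only [id_eq] at this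
    omega
  set x : ℕ → ℕ := fun i => if i = 0 then m else 0 with hx
  set y : ℕ → ℕ := fun i => if i = 0 then m else if i = m then 1 else 0 with hy
  have hxy : (fun i : {i // i ∈ N} => x (0 + i.1)) =
      (fun i : {i // i ∈ N} => y (0 + i.1)) := by
    funext i
    rcases i with ⟨i, hi⟩
    have : i ≠ m := fun h' => hmN (h' ▸ hi)
    simp [hx, hy, this]
  have h1 := h x 0
  have h2 := h y 0
  rw [hxy] at h1
  rw [← h1] at h2
  have hm0 : m ≠ 0 := by omega
  simp [hx, hy, hm0] at h2
end

section
/- Let {A_ℓ}_{ℓ∈ℕ} be a partition of ℕ into finite sets such that at least one A_ℓ contains two or more elements, Λ := ⋃_{ℓ∈ℕ} A_ℓ^ℕ ⊆ ℕ^ℕ, and Φ : Λ → ℕ^ℕ defined by (Φ(x))_j = max_{i≥j} x_i. Then Φ is not continuous (with respect to the subspace topology on Λ and the product topology on ℕ^ℕ). -/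
/-!
If some `A ℓ` contains `a < b`, the sequences `a, …, a, b, b, …` (with `n` leading `a`'s) lie in
`Λ` and converge coordinatewise to the constant sequence `a`, yet the supremum of each of them
is `b`, while that of the limit is `a`.
-/

open Filter Topology

def stepSeq {α : Type*} (a b : α) (n : ℕ) : ℕ → α := fun i => if i < n then a else b

lemma stepSeq_mem {α : Type*} {S : Set α} {a b : α} (ha : a ∈ S) (hb : b ∈ S) (n i : ℕ) :
    stepSeq a b n i ∈ S := by
  unfold stepSeq
  split_ifs <;> assumption

lemma tendsto_stepSeq {α : Type*} [TopologicalSpace α] (a b : α) :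
    Tendsto (stepSeq a b) atTop (𝓝 fun _ => a) := by
  refine tendsto_pi_nhds.2 fun i => tendsto_const_nhds.congr' ?_
  filter_upwards [eventually_gt_atTop i] with n hn
  simp [stepSeq, hn]

lemma sSup_tail_eq {α : Type*} [ConditionallyCompleteLattice α] {x : ℕ → α} {j : ℕ} {m : α}
    (hm : ∃ i, j ≤ i ∧ x i = m) (hle : ∀ i, j ≤ i → x i ≤ m) :
    sSup {k | ∃ i, j ≤ i ∧ x i = k} = m :=
  IsGreatest.csSup_eq ⟨hm, by rintro _ ⟨i, hi, rfl⟩; exact hle i hi⟩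

lemma sSup_stepSeq {α : Type*} [ConditionallyCompleteLinearOrder α] {a b : α} (hab : a ≤ b)
    (n j : ℕ) : sSup {k | ∃ i, j ≤ i ∧ stepSeq a b n i = k} = b := by
  refine sSup_tail_eq ⟨max j n, le_max_left j n, by simp [stepSeq]⟩ fun i _ => ?_
  unfold stepSeq
  split_ifs
  exacts [hab, le_rfl]

theorem max_map_not_continuous_general
    (A : ℕ → Set ℕ)
    (htwo : ∃ ℓ, ∃ a ∈ A ℓ, ∃ b ∈ A ℓ, a ≠ b) :
    ¬ Continuous
        (fun (x : {x : ℕ → ℕ | ∃ ℓ, ∀ i, x i ∈ A ℓ}) (j : ℕ) =>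
          sSup {k | ∃ i, j ≤ i ∧ x.1 i = k}) := by
  intro hcont
  obtain ⟨ℓ, a₀, ha₀, b₀, hb₀, hne⟩ := htwo
  obtain ⟨a, ha, b, hb, hab⟩ : ∃ a ∈ A ℓ, ∃ b ∈ A ℓ, a < b := by
    rcases hne.lt_or_gt with h | h
    exacts [⟨a₀, ha₀, b₀, hb₀, h⟩, ⟨b₀, hb₀, a₀, ha₀, h⟩]
  let Λ := {x : ℕ → ℕ | ∃ ℓ, ∀ i, x i ∈ A ℓ}
  let s : ℕ → Λ := fun n => ⟨stepSeq a b n, ℓ, stepSeq_mem ha hb n⟩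
  let p : Λ := ⟨fun _ => a, ℓ, fun _ => ha⟩
  have hs : Tendsto s atTop (𝓝 p) := tendsto_subtype_rng.2 (tendsto_stepSeq a b)
  have h0 := (((continuous_apply 0).comp hcont).tendsto p).comp hs
  have hsup_s : ∀ n, sSup {k | ∃ i, 0 ≤ i ∧ (s n).1 i = k} = b :=
    fun n => sSup_stepSeq hab.le n 0
  have hsup_p : sSup {k | ∃ i, 0 ≤ i ∧ p.1 i = k} = a :=
    sSup_tail_eq ⟨0, le_rfl, rfl⟩ fun _ _ => le_rfl
  simp only [Function.comp_def, hsup_s, hsup_p] at h0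
  exact hab.ne' (tendsto_const_nhds_iff.1 h0)

/-- Let `{A_ℓ}` be a partition of `ℕ` into finite sets, at least one of which has
two or more elements, `Λ := ⋃_ℓ A_ℓ^ℕ`, and `Φ : Λ → ℕ^ℕ` defined by
`(Φ x)_j = max_{i ≥ j} x_i`. Then `Φ` is not continuous (subspace topology on
`Λ`, product topology on `ℕ^ℕ`). -/
theorem max_map_not_continuous
    (A : ℕ → Set ℕ)
    (hfin : ∀ ℓ, (A ℓ).Finite)
    (hdisj : Pairwise (fun ℓ ℓ' => Disjoint (A ℓ) (A ℓ')))
    (hcover : (⋃ ℓ, A ℓ) = Set.univ)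
    (htwo : ∃ ℓ, ∃ a ∈ A ℓ, ∃ b ∈ A ℓ, a ≠ b) :
    ¬ Continuous
        (fun (x : {x : ℕ → ℕ | ∃ ℓ, ∀ i, x i ∈ A ℓ}) (j : ℕ) =>
          sSup {k | ∃ i, j ≤ i ∧ x.1 i = k}) :=
  max_map_not_continuous_general A htwo
end

section
/- Let {A_ℓ}_{ℓ∈ℕ} be a partition of ℕ into finite sets such that at least one A_ℓ contains two or more elements, Λ := ⋃_{ℓ∈ℕ} A_ℓ^ℕ ⊆ ℕ^ℕ, and Φ : Λ → ℕ^ℕ defined by (Φ(x))_j = max_{i≥j} x_i. Then Φ is not a generalized sliding block code: there is no family {C_b}_{b∈ℕ} of pairwise disjoint sets with union Λ, each nonempty C_b open in Λ, such that (Φ(x))_g = b if and only if σ^g(x) ∈ C_b for all x ∈ Λ, g ∈ ℕ, b ∈ ℕ. -/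
/-- Let `{A_ℓ}` be a partition of `ℕ` into finite sets, at least one of which has
two or more elements, `Λ := ⋃_ℓ A_ℓ^ℕ`, and `Φ : Λ → ℕ^ℕ` defined by
`(Φ x)_j = max_{i ≥ j} x_i`. Then `Φ` is not a generalized sliding block code:
there is no family `{C_b}_{b∈ℕ}` of pairwise disjoint sets with union `Λ`, each
nonempty `C_b` open in `Λ`, such that `(Φ x)_g = b ↔ σ^g x ∈ C_b` for all
`x ∈ Λ`, `g`, `b`. -/
theorem max_map_not_generalized_sliding_block_code
    (A : ℕ → Set ℕ)
    (hfin : ∀ ℓ, (A ℓ).Finite)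
    (hdisj : Pairwise (fun ℓ ℓ' => Disjoint (A ℓ) (A ℓ')))
    (hcover : (⋃ ℓ, A ℓ) = Set.univ)
    (htwo : ∃ ℓ, ∃ a ∈ A ℓ, ∃ b ∈ A ℓ, a ≠ b) :
    ¬ ∃ C : ℕ → Set (ℕ → ℕ),
        Pairwise (fun b b' => Disjoint (C b) (C b')) ∧
        (⋃ b, C b) = {x : ℕ → ℕ | ∃ ℓ, ∀ i, x i ∈ A ℓ} ∧
        (∀ b, (C b).Nonempty →
          IsOpen ((Subtype.val : {x : ℕ → ℕ | ∃ ℓ, ∀ i, x i ∈ A ℓ} → (ℕ → ℕ)) ⁻¹' C b)) ∧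
        (∀ (x : {x : ℕ → ℕ | ∃ ℓ, ∀ i, x i ∈ A ℓ}) (g b : ℕ),
          sSup {k | ∃ i, g ≤ i ∧ x.1 i = k} = b ↔ (fun i => x.1 (g + i)) ∈ C b) := by
  obtain ⟨ℓ, a, ha, b, hb, hab⟩ := htwo
  -- normalize: d < c, both in A ℓ
  obtain ⟨d, c, hd, hc, hdc⟩ : ∃ d c, d ∈ A ℓ ∧ c ∈ A ℓ ∧ d < c := by
    rcases lt_or_gt_of_ne hab with h | h
    · exact ⟨a, b, ha, hb, h⟩
    · exact ⟨b, a, hb, ha, h⟩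
  rintro ⟨C, hdisjC, hcov, hopen, hiff⟩
  set Λ : Set (ℕ → ℕ) := {x : ℕ → ℕ | ∃ ℓ, ∀ i, x i ∈ A ℓ} with hΛ
  set x : ℕ → ℕ := fun _ => d with hxdef
  have hxΛ : x ∈ Λ := ⟨ℓ, fun _ => hd⟩
  have hxsup : sSup {k | ∃ i, (0:ℕ) ≤ i ∧ x i = k} = d := by
    have hset : {k | ∃ i, (0:ℕ) ≤ i ∧ x i = k} = {d} := by
      ext k
      simp [hxdef, eq_comm]
    rw [hset, csSup_singleton]
  have hxCd : x ∈ C d := by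
    have := (hiff ⟨x, hxΛ⟩ 0 d).1 hxsup
    simpa using this
  have hopen' := hopen d ⟨x, hxCd⟩
  rw [isOpen_induced_iff] at hopen'
  obtain ⟨V, hVopen, hVeq⟩ := hopen'
  have hxV : x ∈ V := by
    have : (⟨x, hxΛ⟩ : Λ) ∈ Subtype.val ⁻¹' V := by
      rw [hVeq]; exact hxCd
    exact this
  obtain ⟨I, u, hu, hsub⟩ := isOpen_pi_iff.1 hVopen x hxV
  set N : ℕ := I.sup id + 1 with hN
  set y : ℕ → ℕ := fun i => if i < N then d else c with hydef
  have hyΛ : y ∈ Λ := by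
    refine ⟨ℓ, fun i => ?_⟩
    by_cases h : i < N <;> simp [hydef, h, hd, hc]
  have hyV : y ∈ V := by
    apply hsub
    intro i hi
    have hiN : i < N := Nat.lt_succ_of_le (Finset.le_sup (f := id) hi)
    have : y i = x i := by simp [hydef, hxdef, hiN]
    rw [this]
    exact (hu i hi).2
  have hyCd : y ∈ C d := by
    have : (⟨y, hyΛ⟩ : Λ) ∈ Subtype.val ⁻¹' C d := by
      rw [← hVeq]; exact hyV
    exact this
  have hysup : sSup {k | ∃ i, (0:ℕ) ≤ i ∧ y i = k} = c := by
    have hset : {k | ∃ i, (0:ℕ) ≤ i ∧ y i = k} = {d, c} := by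
      ext k
      constructor
      · rintro ⟨i, -, rfl⟩
        by_cases h : i < N <;> simp [hydef, h]
      · rintro (rfl | rfl)
        · exact ⟨0, le_refl _, by simp [hydef, hN]⟩
        · exact ⟨N, Nat.zero_le _, by simp [hydef]⟩
    rw [hset, csSup_pair]
    exact sup_eq_right.2 hdc.le
  have hyCc : y ∈ C c := by
    have := (hiff ⟨y, hyΛ⟩ 0 c).1 hysup
    simpa using this
  exact Set.disjoint_left.1 (hdisjC hdc.ne) hyCd hyCc
end
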